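/- Let (X, ⊥, F) be an O-space. Then for all A, B, C ∈ F with A ⊆ B: (C ⊗ B) ⊗ A = C ⊗ A = (C ⊗ A) ⊗ B. -/
import Mathlib


variable {X : Type*}

/-- Orthogonal complement: `A^⊥ = {b : b ⊥ a for all a ∈ A}`. -/
def oc (R : X → X → Prop) (A : Set X) : Set X := {b | ∀ a ∈ A, R b a}

/-- Closure: `cl(A) = (A^⊥)^⊥`. -/
def ocl (R : X → X → Prop) (A : Set X) : Set X := oc R (oc R A)

/-- The zero set `Z = {y : y ⊥ x for all x}`. -/
def zset (R : X → X → Prop) : Set X := {y | ∀ x, R y x}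

/-- Sasaki projection `A ⊗ B = cl(B) ∩ (cl(B) ∩ A^⊥)^⊥`. -/
def sproj (R : X → X → Prop) (A B : Set X) : Set X :=
  ocl R B ∩ oc R (ocl R B ∩ oc R A)

/-- Dual of the Sasaki projection: `A ⊕ B = (B^⊥ ⊗ A^⊥)^⊥`. -/
def sdual (R : X → X → Prop) (A B : Set X) : Set X :=
  oc R (sproj R (oc R B) (oc R A))

/-- Set orthogonality: `A ⊥ B` iff `a ⊥ b` for all `a ∈ A`, `b ∈ B`. -/
def orth (R : X → X → Prop) (A B : Set X) : Prop := ∀ a ∈ A, ∀ b ∈ B, R a b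

/-- An O-space: a symmetric relation satisfying Z, together with a family `F`
of subsets satisfying properties F, O and A. -/
structure IsOSpace (R : X → X → Prop) (F : Set (Set X)) : Prop where
  symm : ∀ x y : X, R x y → R y x
  zero : ∀ x : X, R x x → x ∈ zset R
  flats : ∀ A ∈ F, A = ocl R A
  singcl_mem : ∀ x : X, ocl R {x} ∈ F
  z_mem : zset R ∈ F
  oc_mem : ∀ A ∈ F, oc R A ∈ F
  sproj_mem : ∀ A ∈ F, ∀ B ∈ F, sproj R A B ∈ F
  o1 : ∀ x : X, ∀ A ∈ F, x ∈ ocl R (sproj R {x} A ∪ sproj R {x} (oc R A))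
  o2 : ∀ x : X, ∀ A ∈ F, sproj R {x} A ⊆ ocl R ({x} ∪ sproj R {x} (oc R A))
  a : ∀ A ∈ F, ∀ B ∈ F, sproj R A B ⊆ ⋃ a ∈ A, sproj R {a} B

lemma oc_anti {R : X → X → Prop} {A B : Set X} (hAB : A ⊆ B) : oc R B ⊆ oc R A :=
  fun x hx a ha => hx a (hAB ha)

lemma subset_ocl {R : X → X → Prop} (hs : ∀ x y : X, R x y → R y x) (A : Set X) :
    A ⊆ ocl R A :=
  fun a ha b hb => hs b a (hb a ha)

lemma oc_ocl {R : X → X → Prop} (hs : ∀ x y : X, R x y → R y x) (A : Set X) :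
    oc R (ocl R A) = oc R A :=
  Set.Subset.antisymm (oc_anti (subset_ocl hs A)) (subset_ocl hs (oc R A))

theorem stmt14 (R : X → X → Prop) (F : Set (Set X)) (h : IsOSpace R F)
    (A B C : Set X) (hA : A ∈ F) (hB : B ∈ F) (hC : C ∈ F) (hAB : A ⊆ B) :
    sproj R (sproj R C B) A = sproj R C A ∧
    sproj R (sproj R C A) B = sproj R C A := by
  have hsym := h.symm
  have hAc : ocl R A = A := (h.flats A hA).symm
  have hBc : ocl R B = B := (h.flats B hB).symm
  -- Key fact for part 1: `A ∩ (C⊗B)^⊥ = A ∩ C^⊥`.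
  have key1 : A ∩ oc R (sproj R C B) = A ∩ oc R C := by
    apply Set.Subset.antisymm
    · rintro x ⟨hxA, hxo⟩
      refine ⟨hxA, fun c hc => ?_⟩
      have hc1 := h.o1 c B hB
      have hx2 : x ∈ oc R (sproj R {c} B ∪ sproj R {c} (oc R B)) := by
        rintro z (hz | hz)
        · -- `z ∈ {c}⊗B ⊆ C⊗B`, and `x ⊥ C⊗B`.
          apply hxo
          refine ⟨hz.1, fun w hw => hz.2 w ⟨hw.1, fun a ha => ?_⟩⟩
          rw [Set.mem_singleton_iff] at ha
          rw [ha]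
          exact hw.2 c hc
        · -- `z ∈ {c}⊗B^⊥ ⊆ cl(B)^⊥` and `x ∈ A ⊆ B ⊆ cl B`.
          have hzB : z ∈ oc R (ocl R B) := hz.1
          exact hsym z x (hzB x (subset_ocl hsym B (hAB hxA)))
      exact hsym c x (hc1 x hx2)
    · rintro x ⟨hxA, hxC⟩
      refine ⟨hxA, fun z hz => ?_⟩
      exact hsym z x (hz.2 x ⟨subset_ocl hsym B (hAB hxA), hxC⟩)
  have part1 : sproj R (sproj R C B) A = sproj R C A := by
    show ocl R A ∩ oc R (ocl R A ∩ oc R (sproj R C B)) =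
      ocl R A ∩ oc R (ocl R A ∩ oc R C)
    rw [hAc, key1]
  -- Part 2: with `D = C⊗A`, a flat contained in `B`, we have `D⊗B = D`.
  have hD : sproj R C A ∈ F := h.sproj_mem C hC A hA
  have hDc : ocl R (sproj R C A) = sproj R C A := (h.flats _ hD).symm
  have hDA : sproj R C A ⊆ A := by
    intro x hx
    exact hAc ▸ hx.1
  have sup2 : sproj R C A ⊆ sproj R (sproj R C A) B := by
    intro x hx
    exact ⟨subset_ocl hsym B (hAB (hDA hx)), fun w hw => hsym w x (hw.2 x hx)⟩
  have sub2 : sproj R (sproj R C A) B ⊆ sproj R C A := by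
    intro z hz
    have hzu := h.a _ hD B hB hz
    rw [Set.mem_iUnion₂] at hzu
    obtain ⟨d, hd, hzd⟩ := hzu
    have hz2 := h.o2 d B hB hzd
    -- `{d} ∪ {d}⊗B^⊥ ⊆ cl D`.
    have hsub : ({d} ∪ sproj R {d} (oc R B) : Set X) ⊆ ocl R (sproj R C A) := by
      rintro y (hy | hy)
      · rw [Set.mem_singleton_iff] at hy
        rw [hy]
        exact subset_ocl hsym _ hd
      · -- elements of `{d}⊗B^⊥` are self-orthogonal, hence in `Z ⊆ cl D`.
        have hyd : R y d := hy.1 d (subset_ocl hsym B (hAB (hDA hd)))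
        have hyy : R y y := hy.2 y ⟨hy.1, fun a ha => by
          rw [Set.mem_singleton_iff] at ha
          rw [ha]
          exact hyd⟩
        have hyz := h.zero y hyy
        exact fun a _ => hyz a
    have h2 : z ∈ ocl R (sproj R C A) := by
      intro a ha
      have ha' : a ∈ oc R (ocl R (sproj R C A)) := by
        rw [oc_ocl hsym]; exact ha
      exact hz2 a (oc_anti hsub ha')
    exact hDc.subset h2
  exact ⟨part1, Set.Subset.antisymm sub2 sup2⟩
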